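/- arXiv:1703.10718 — 3 statements merged into one kernel-verified Lean document; each statement's English description precedes it below -/
import Mathlib

section
/- Let s > 1/2. Define λ_n = ⟨n⟩^{-(2s+2-2σ)} and λ̃_n = ⟨n⟩^{2σ}/(1+|n|²+|n|^{2s+2}) for n ∈ ℤ² and a fixed σ < s. Then the series Σ_{n ∈ ℤ²} (λ_n - λ̃_n)²/(λ_n + λ̃_n)² converges. -/
/-!
Write `a = ⟨n⟩² = 1 + |n|²`. Both eigenvalues carry the factor `a^σ`: `λ_n = a^σ / E` and
`λ̃_n = a^σ / D` with `E = a^{s+1}` and `D = a + |n|^{2s+2}`, so the Kakutani ratio is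
`(D - E) / (D + E)`. By the mean value theorem `|D - E| ≤ a + (s+1) a^s`, hence the squared ratio
is `O(a^{-2s} + a^{-2})`, which is summable over `ℤ²` because `2s > 1`.
-/

open Real

lemma rpow_sub_rpow_le_mul_rpow_mul_sub {x y p : ℝ} (hx : 0 ≤ x) (hxy : x ≤ y) (hp : 1 ≤ p) :
    y ^ p - x ^ p ≤ p * y ^ (p - 1) * (y - x) := by
  rcases hxy.eq_or_lt with rfl | hlt
  · simp
  obtain ⟨c, hc, hslope⟩ := exists_hasDerivAt_eq_slope (fun t => t ^ p)
    (fun t => p * t ^ (p - 1)) hlt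
    (fun t _ => (continuousAt_rpow_const t p (Or.inr (by linarith))).continuousWithinAt)
    (fun t ht => hasDerivAt_rpow_const (Or.inl (hx.trans_lt ht.1).ne'))
  have hc_le : c ^ (p - 1) ≤ y ^ (p - 1) :=
    rpow_le_rpow (hx.trans hc.1.le) hc.2.le (by linarith)
  rw [eq_div_iff (sub_ne_zero.mpr hlt.ne')] at hslope
  rw [← hslope]
  gcongr

lemma summable_one_add_int_sq_rpow_neg {q : ℝ} (hq : 1 / 2 < q) :
    Summable fun a : ℤ => (1 + (a : ℝ) ^ 2) ^ (-q) := by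
  refine (summable_abs_int_rpow (b := 2 * q) (by linarith)).of_norm_bounded_eventually ?_
  filter_upwards [(Set.finite_singleton (0 : ℤ)).compl_mem_cofinite] with a ha_ne
  have ha : (a : ℝ) ≠ 0 := by exact_mod_cast ha_ne
  rw [norm_of_nonneg (by positivity), ← sq_abs, show -(2 * q) = 2 * -q by ring,
    rpow_mul (abs_nonneg _), rpow_two]
  exact rpow_le_rpow_of_nonpos (by positivity) (by linarith) (by linarith)

lemma summable_one_add_sq_add_sq_rpow_neg {p : ℝ} (hp : 1 < p) :
    Summable fun n : ℤ × ℤ => (1 + (n.1 : ℝ) ^ 2 + (n.2 : ℝ) ^ 2) ^ (-p) := by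
  have h := summable_one_add_int_sq_rpow_neg (q := p / 2) (by linarith)
  refine (h.mul_of_nonneg h (fun _ => by positivity) (fun _ => by positivity)).of_nonneg_of_le
    (fun _ => by positivity) fun n => ?_
  set x : ℝ := (n.1 : ℝ)
  set y : ℝ := (n.2 : ℝ)
  have hprod : (1 + x ^ 2) * (1 + y ^ 2) ≤ (1 + x ^ 2 + y ^ 2) ^ (2 : ℝ) := by
    rw [rpow_two]
    nlinarith [sq_nonneg x, sq_nonneg y, sq_nonneg (x * y)]
  calc (1 + x ^ 2 + y ^ 2) ^ (-p) = ((1 + x ^ 2 + y ^ 2) ^ (2 : ℝ)) ^ (-(p / 2)) := by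
        rw [← rpow_mul (by positivity)]
        ring_nf
    _ ≤ ((1 + x ^ 2) * (1 + y ^ 2)) ^ (-(p / 2)) :=
        rpow_le_rpow_of_nonpos (by positivity) hprod (by linarith)
    _ = (1 + x ^ 2) ^ (-(p / 2)) * (1 + y ^ 2) ^ (-(p / 2)) :=
        mul_rpow (by positivity) (by positivity)

lemma div_sub_div_div_div_add_div_same_num {c D E : ℝ} (hc : c ≠ 0) (hD : D ≠ 0) (hE : E ≠ 0) :
    (c / E - c / D) / (c / E + c / D) = (D - E) / (D + E) := by
  rw [div_sub_div _ _ hE hD, div_add_div _ _ hE hD, div_div_div_cancel_right₀ (mul_ne_zero hE hD)]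
  rw [mul_comm E c, ← mul_sub, ← mul_add, mul_div_mul_left _ _ hc]

lemma abs_one_add_add_rpow_sub_rpow_le {r s : ℝ} (hr : 0 ≤ r) (hs : 0 ≤ s) :
    |1 + r + r ^ (s + 1) - (1 + r) ^ (s + 1)| ≤ (1 + r) + (s + 1) * (1 + r) ^ s := by
  have hmono : r ^ (s + 1) ≤ (1 + r) ^ (s + 1) := rpow_le_rpow hr (by linarith) (by linarith)
  have hmvt := rpow_sub_rpow_le_mul_rpow_mul_sub hr (by linarith : r ≤ 1 + r)
    (by linarith : (1 : ℝ) ≤ s + 1)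
  rw [add_sub_cancel_right, add_sub_cancel_right, mul_one] at hmvt
  have : 0 ≤ (s + 1) * (1 + r) ^ s := by positivity
  rw [abs_le]
  constructor <;> linarith

lemma kakutani_ratio_sq_le {r s : ℝ} (σ : ℝ) (hr : 0 ≤ r) (hs : 0 ≤ s) :
    (((1 + r) ^ (-(2 * s + 2 - 2 * σ) / 2) - (1 + r) ^ σ / (1 + r + r ^ (s + 1))) /
      ((1 + r) ^ (-(2 * s + 2 - 2 * σ) / 2) + (1 + r) ^ σ / (1 + r + r ^ (s + 1)))) ^ 2
    ≤ 2 * ((1 + r) ^ (-(2 * s)) + (s + 1) ^ 2 * (1 + r) ^ (-2 : ℝ)) := by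
  set a := 1 + r
  have ha : 0 < a := by positivity
  set D := a + r ^ (s + 1)
  set E := a ^ (s + 1)
  have hD : 0 < D := by positivity
  have hE : 0 < E := by positivity
  have hlam : a ^ (-(2 * s + 2 - 2 * σ) / 2) = a ^ σ / E := by
    rw [← rpow_sub ha]; ring_nf
  have hbound : |(D - E) / (D + E)| ≤ a ^ (-s) + (s + 1) * a ^ (-1 : ℝ) :=
    calc |(D - E) / (D + E)| ≤ |D - E| / E := by
          rw [abs_div, abs_of_pos (add_pos hD hE)]
          gcongr
          linarith
      _ ≤ (a + (s + 1) * a ^ s) / E := by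
          gcongr
          exact abs_one_add_add_rpow_sub_rpow_le hr hs
      _ = a ^ (-s) + (s + 1) * a ^ (-1 : ℝ) := by
          rw [show -s = 1 - (s + 1) by ring, show (-1 : ℝ) = s - (s + 1) by ring,
            rpow_sub ha, rpow_sub ha, rpow_one]
          ring
  rw [hlam, div_sub_div_div_div_add_div_same_num (by positivity) hD.ne' hE.ne', ← sq_abs]
  calc |(D - E) / (D + E)| ^ 2 ≤ (a ^ (-s) + (s + 1) * a ^ (-1 : ℝ)) ^ 2 := by
        gcongr
    _ ≤ 2 * ((a ^ (-s)) ^ 2 + ((s + 1) * a ^ (-1 : ℝ)) ^ 2) := add_sq_le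
    _ = 2 * (a ^ (-(2 * s)) + (s + 1) ^ 2 * a ^ (-2 : ℝ)) := by
        rw [mul_pow, ← rpow_mul_natCast ha.le, ← rpow_mul_natCast ha.le]
        ring_nf

theorem stmt1_general (s σ : ℝ) (hs : 1 / 2 < s) :
    Summable (fun n : ℤ × ℤ =>
      (((1 + (n.1 : ℝ) ^ 2 + (n.2 : ℝ) ^ 2) ^ (-(2 * s + 2 - 2 * σ) / 2) -
          (1 + (n.1 : ℝ) ^ 2 + (n.2 : ℝ) ^ 2) ^ (σ) /
            (1 + ((n.1 : ℝ) ^ 2 + (n.2 : ℝ) ^ 2) +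
              ((n.1 : ℝ) ^ 2 + (n.2 : ℝ) ^ 2) ^ (s + 1))) /
        ((1 + (n.1 : ℝ) ^ 2 + (n.2 : ℝ) ^ 2) ^ (-(2 * s + 2 - 2 * σ) / 2) +
          (1 + (n.1 : ℝ) ^ 2 + (n.2 : ℝ) ^ 2) ^ (σ) /
            (1 + ((n.1 : ℝ) ^ 2 + (n.2 : ℝ) ^ 2) +
              ((n.1 : ℝ) ^ 2 + (n.2 : ℝ) ^ 2) ^ (s + 1)))) ^ 2) := by
  have hbound : Summable fun n : ℤ × ℤ =>
      2 * ((1 + (n.1 : ℝ) ^ 2 + (n.2 : ℝ) ^ 2) ^ (-(2 * s)) +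
        (s + 1) ^ 2 * (1 + (n.1 : ℝ) ^ 2 + (n.2 : ℝ) ^ 2) ^ (-2 : ℝ)) :=
    ((summable_one_add_sq_add_sq_rpow_neg (by linarith)).add
      ((summable_one_add_sq_add_sq_rpow_neg one_lt_two).mul_left _)).mul_left 2
  refine hbound.of_nonneg_of_le (fun _ => sq_nonneg _) fun n => ?_
  rw [add_assoc (1 : ℝ)]
  exact kakutani_ratio_sq_le σ (by positivity) (by linarith)

/-- Kakutani summability criterion for the equivalence of `μ_s` and `μ̃_s`.
Here `⟨n⟩² = 1 + |n|²`, `λ_n = ⟨n⟩^{-(2s+2-2σ)}` and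
`λ̃_n = ⟨n⟩^{2σ}/(1+|n|²+|n|^{2s+2})`. For `s > 1/2` and `σ < s`,
`∑_{n ∈ ℤ²} (λ_n - λ̃_n)²/(λ_n + λ̃_n)² < ∞`. -/
theorem stmt1 (s σ : ℝ) (hs : 1 / 2 < s) (hσ : σ < s) :
    Summable (fun n : ℤ × ℤ =>
      (((1 + (n.1 : ℝ) ^ 2 + (n.2 : ℝ) ^ 2) ^ (-(2 * s + 2 - 2 * σ) / 2) -
          (1 + (n.1 : ℝ) ^ 2 + (n.2 : ℝ) ^ 2) ^ (σ) /
            (1 + ((n.1 : ℝ) ^ 2 + (n.2 : ℝ) ^ 2) +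
              ((n.1 : ℝ) ^ 2 + (n.2 : ℝ) ^ 2) ^ (s + 1))) /
        ((1 + (n.1 : ℝ) ^ 2 + (n.2 : ℝ) ^ 2) ^ (-(2 * s + 2 - 2 * σ) / 2) +
          (1 + (n.1 : ℝ) ^ 2 + (n.2 : ℝ) ^ 2) ^ (σ) /
            (1 + ((n.1 : ℝ) ^ 2 + (n.2 : ℝ) ^ 2) +
              ((n.1 : ℝ) ^ 2 + (n.2 : ℝ) ^ 2) ^ (s + 1)))) ^ 2) :=
  stmt1_general s σ hs
end

section
/- Suppose a measurable function F on a probability space satisfies the pointwise bound −F ≤ K (deterministic constant) and the L^p moment bound ‖F − F₀‖_{L^p} ≤ C p² for all p ≥ 2 and another function F₀ with −F₀ ≤ K₀ < log λ / 2 for a given λ ≥ e. Then the measure of the set {−F > log λ} is at most C' exp(−c (log λ)^{1/2}). -/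
open MeasureTheory

/-- Nelson-type estimate. If `−F ≤ K` pointwise, `‖F − F₀‖_{L^p} ≤ C p²`
for all `p ≥ 2`, and `−F₀ ≤ K₀ < (log λ)/2` with `λ ≥ e`, then
`P(−F > log λ) ≤ C' exp(−c (log λ)^{1/2})`, with `C', c` depending only on `C, K₀`. -/
theorem stmt7 (C K₀ : ℝ) (hC : 0 < C) :
    ∃ C' c : ℝ, 0 < C' ∧ 0 < c ∧
      ∀ (Ω : Type) (_ : MeasurableSpace Ω) (P : Measure Ω), IsProbabilityMeasure P →
        ∀ (F F₀ : Ω → ℝ) (K lam : ℝ), Measurable F → Measurable F₀ →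
          (∀ ω, -F ω ≤ K) → (∀ ω, -F₀ ω ≤ K₀) →
          Real.exp 1 ≤ lam → K₀ < Real.log lam / 2 →
          (∀ p : ℝ, 2 ≤ p →
            ∫⁻ ω, ENNReal.ofReal (|F ω - F₀ ω| ^ p) ∂P ≤
              ENNReal.ofReal ((C * p ^ 2) ^ p)) →
          P {ω | Real.log lam < -F ω} ≤
            ENNReal.ofReal (C' * Real.exp (-c * Real.sqrt (Real.log lam))) := by
  have he : (0:ℝ) < Real.exp 1 := Real.exp_pos 1
  have h2C : (0:ℝ) < Real.sqrt (2 * C) := Real.sqrt_pos.mpr (by linarith)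
  refine ⟨Real.exp 4, 2 / (Real.exp 1 * Real.sqrt (2 * C)), Real.exp_pos 4,
    div_pos two_pos (mul_pos he h2C), ?_⟩
  intro Ω mΩ P hP F F₀ K lam hF hF₀ hKbd hK0bd hlam hK0 hmom
  set c : ℝ := 2 / (Real.exp 1 * Real.sqrt (2 * C)) with hc
  set L : ℝ := Real.log lam with hLdef
  have hL1 : (1:ℝ) ≤ L := by
    have := Real.log_le_log (Real.exp_pos 1) hlam
    simpa [Real.log_exp] using this
  have hLpos : (0:ℝ) < L := by linarith
  set p : ℝ := Real.sqrt L / (Real.exp 1 * Real.sqrt (2 * C)) with hpdef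
  have hsL : Real.sqrt L * Real.sqrt L = L := Real.mul_self_sqrt hLpos.le
  have hs2C : Real.sqrt (2 * C) * Real.sqrt (2 * C) = 2 * C :=
    Real.mul_self_sqrt (by linarith)
  have hppos : 0 < p := div_pos (Real.sqrt_pos.mpr hLpos) (mul_pos he h2C)
  have hcL : c * Real.sqrt L = 2 * p := by
    rw [hc, hpdef]; ring
  -- key identity : C * p ^ 2 = exp (-2) * (L / 2)
  have hkey : C * p ^ 2 = Real.exp (-2) * (L / 2) := by
    have h1 : p * p = L / (Real.exp 1 * Real.exp 1 * (2 * C)) := by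
      rw [hpdef, div_mul_div_comm, hsL, mul_mul_mul_comm, hs2C]
    have he2 : Real.exp (-2) = (Real.exp 1 * Real.exp 1)⁻¹ := by
      rw [← Real.exp_add, show (-2:ℝ) = -(1+1) by norm_num, Real.exp_neg]
    rw [pow_two, h1, he2]
    field_simp
  set A : Set Ω := {ω | L < -F ω} with hA
  have hAmeas : MeasurableSet A := measurableSet_lt measurable_const hF.neg
  by_cases hp2 : 2 ≤ p
  · -- Chebyshev case
    have hlow : ∀ ω ∈ A, ENNReal.ofReal ((L/2) ^ p) ≤
        ENNReal.ofReal (|F ω - F₀ ω| ^ p) := by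
      intro ω hω
      have hFω : F ω < -L := by simpa [hA, lt_neg] using hω
      have hF₀ω : -K₀ ≤ F₀ ω := by have := hK0bd ω; linarith
      have habs : L / 2 ≤ |F ω - F₀ ω| := by
        rw [abs_sub_comm]
        calc L / 2 ≤ F₀ ω - F ω := by linarith
        _ ≤ |F₀ ω - F ω| := le_abs_self _
      exact ENNReal.ofReal_le_ofReal
        (Real.rpow_le_rpow (by linarith) habs hppos.le)
    have h1 : ENNReal.ofReal ((L/2) ^ p) * P A ≤
        ENNReal.ofReal ((C * p ^ 2) ^ p) := by
      calc ENNReal.ofReal ((L/2) ^ p) * P A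
          = ∫⁻ _ω in A, ENNReal.ofReal ((L/2) ^ p) ∂P := by
            rw [setLIntegral_const]
        _ ≤ ∫⁻ ω in A, ENNReal.ofReal (|F ω - F₀ ω| ^ p) ∂P :=
            setLIntegral_mono' hAmeas hlow
        _ ≤ ∫⁻ ω, ENNReal.ofReal (|F ω - F₀ ω| ^ p) ∂P :=
            setLIntegral_le_lintegral _ _
        _ ≤ ENNReal.ofReal ((C * p ^ 2) ^ p) := hmom p hp2
    have hsplit : ENNReal.ofReal ((C * p ^ 2) ^ p) =
        ENNReal.ofReal (Real.exp (-2 * p)) * ENNReal.ofReal ((L/2) ^ p) := by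
      rw [hkey, Real.mul_rpow (Real.exp_pos _).le (by linarith),
        ← Real.exp_mul, ← ENNReal.ofReal_mul (Real.exp_pos _).le]
    have hLp0 : ENNReal.ofReal ((L/2) ^ p) ≠ 0 := by
      simp only [ne_eq, ENNReal.ofReal_eq_zero, not_le]
      exact Real.rpow_pos_of_pos (by linarith) _
    have h2 : P A ≤ ENNReal.ofReal (Real.exp (-2 * p)) := by
      rw [hsplit] at h1
      rw [mul_comm (ENNReal.ofReal ((L/2) ^ p)) (P A)] at h1
      exact (ENNReal.mul_le_mul_iff_left hLp0 ENNReal.ofReal_ne_top).mp h1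
    refine h2.trans (ENNReal.ofReal_le_ofReal ?_)
    have h3 : Real.exp (-2 * p) = Real.exp (-c * Real.sqrt L) := by
      congr 1
      rw [neg_mul, neg_mul, hcL]
    rw [h3]
    nth_rewrite 1 [← one_mul (Real.exp (-c * Real.sqrt L))]
    refine mul_le_mul_of_nonneg_right ?_ (Real.exp_pos _).le
    rw [show (1:ℝ) = Real.exp 0 by simp]
    exact Real.exp_le_exp.mpr (by norm_num)
  · -- small case : P A ≤ 1 ≤ RHS
    push_neg at hp2
    have h4 : c * Real.sqrt L ≤ 4 := by rw [hcL]; linarith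
    have : (1:ℝ) ≤ Real.exp 4 * Real.exp (-c * Real.sqrt L) := by
      rw [← Real.exp_add, show (1:ℝ) = Real.exp 0 by simp]
      exact Real.exp_le_exp.mpr (by linarith)
    calc P A ≤ 1 := prob_le_one
      _ ≤ ENNReal.ofReal (Real.exp 4 * Real.exp (-c * Real.sqrt L)) := by
          rw [← ENNReal.ofReal_one]
          exact ENNReal.ofReal_le_ofReal this
end

section
/- Let f : [0,∞) → [0,∞) satisfy f(t) ≤ (f(0)^{1/p} + Ct)^p for all p ≥ 2 and t ∈ [0, t_r] where C t_r = 1/4. Then for every ε ∈ (0,1) there exists δ > 0 (depending only on ε) such that f(0) < δ implies f(t) < ε for all t ∈ [0, t_r]. -/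
/-- If `f : [0,∞) → [0,∞)` satisfies `f(t) ≤ (f(0)^{1/p} + Ct)^p` for all
`p ≥ 2` and `t ∈ [0, t_r]` with `C t_r = 1/4`, then for every `ε ∈ (0,1)` there exists
`δ > 0` depending only on `ε` such that `f(0) < δ` implies `f(t) < ε` on `[0, t_r]`. -/
theorem stmt10 (ε : ℝ) (hε0 : 0 < ε) (hε1 : ε < 1) :
    ∃ δ : ℝ, 0 < δ ∧
      ∀ (f : ℝ → ℝ) (C tr : ℝ), 0 < C → C * tr = 1 / 4 →
        (∀ t, 0 ≤ f t) →
        (∀ p : ℝ, 2 ≤ p → ∀ t, 0 ≤ t → t ≤ tr → f t ≤ (f 0 ^ (1 / p) + C * t) ^ p) →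
        f 0 < δ → ∀ t, 0 ≤ t → t ≤ tr → f t < ε := by
  set p : ℝ := Real.logb 2 ε⁻¹ + 2 with hp
  have hlogb : 0 < Real.logb 2 ε⁻¹ := by
    apply Real.logb_pos (by norm_num)
    rw [one_lt_inv_iff₀]; exact ⟨hε0, hε1⟩
  have hp2 : (2:ℝ) ≤ p := by rw [hp]; linarith
  have hppos : 0 < p := by linarith
  have hhalf : ((1:ℝ)/2) ^ p < ε := by
    have : ((1:ℝ)/2) ^ p = (2:ℝ) ^ (-p) := by
      rw [Real.rpow_neg (by norm_num), one_div, ← Real.inv_rpow (by norm_num)]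
    rw [this]
    have hε' : ε = (2:ℝ) ^ (Real.logb 2 ε) := by
      rw [Real.rpow_logb (by norm_num) (by norm_num) hε0]
    rw [hε']
    apply Real.rpow_lt_rpow_left_iff (by norm_num) |>.mpr
    have : Real.logb 2 ε⁻¹ = - Real.logb 2 ε := Real.logb_inv ..
    rw [hp, this]; linarith
  refine ⟨((1:ℝ)/4) ^ p, Real.rpow_pos_of_pos (by norm_num) p, ?_⟩
  intro f C tr hC htr hf0 hbound hδ t ht htr'
  have hCt : C * t ≤ 1/4 := by
    calc C * t ≤ C * tr := by nlinarith
    _ = 1/4 := htr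
  have hCt0 : 0 ≤ C * t := mul_nonneg hC.le ht
  have hroot : f 0 ^ (1/p) < 1/4 := by
    have h1 : f 0 ^ (1/p) < (((1:ℝ)/4) ^ p) ^ (1/p) :=
      Real.rpow_lt_rpow (hf0 0) hδ (by positivity)
    have h2 : (((1:ℝ)/4) ^ p) ^ (1/p) = (1:ℝ)/4 := by
      rw [← Real.rpow_mul (by norm_num), mul_one_div_cancel hppos.ne', Real.rpow_one]
    rwa [h2] at h1
  have hsum : f 0 ^ (1/p) + C * t ≤ 1/2 := by linarith
  have hsum0 : 0 ≤ f 0 ^ (1/p) + C * t := add_nonneg (Real.rpow_nonneg (hf0 0) _) hCt0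
  calc f t ≤ (f 0 ^ (1/p) + C * t) ^ p := hbound p hp2 t ht htr'
    _ ≤ ((1:ℝ)/2) ^ p := Real.rpow_le_rpow hsum0 hsum hppos.le
    _ < ε := hhalf
end
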